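/- arXiv:1403.1850 — 4 statements merged into one kernel-verified Lean document; each statement's English description precedes it below -/
import Mathlib

section
/- For n ≥ 2, the sum of the solid angles at the vertices of a nondegenerate n-simplex in ℝⁿ is at most half the (n−1)-dimensional volume of the unit sphere S^{n−1}. -/
/-!
Translate the cone at each vertex to the origin and add its reflection through the origin.
Measured by the linear parts of the barycentric coordinates, which sum to zero on every vector,
the cone at vertex `i` consists of the vectors whose coordinates other than the `i`-th are
nonnegative. Hence two of the cones meet only in `0`, and the cone at `i` meets the reflected
cone at `j` only along the ray through `v j - v i`. The `2(n+1)` closed cones therefore cut the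
unit sphere in sets that pairwise share at most one point, which is `μH[n-1]`-null for `n ≥ 2`;
since translations and the reflection are isometries, twice the sum of the solid angles is at
most the measure of the sphere.
-/

open MeasureTheory

/-- The solid angle cone at the vertex `v i` of the simplex with vertices
`v 0, …, v n`: the convex cone based at `v i` spanned by the edges incident to
`v i`. -/
def vertexCone {n : ℕ} (v : Fin (n + 1) → EuclideanSpace ℝ (Fin n))
    (i : Fin (n + 1)) : Set (EuclideanSpace ℝ (Fin n)) :=
  {p | ∃ a : Fin (n + 1) → ℝ, (∀ j, 0 ≤ a j) ∧
    p = v i + ∑ j ∈ Finset.univ.erase i, a j • (v j - v i)}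

/-- The solid angle of the simplex with vertices `v` at the vertex `v i`: the
`(n-1)`-dimensional Hausdorff measure of the intersection of the unit sphere
centered at `v i` with the cone at `v i`. -/
noncomputable def solidAngle {n : ℕ} (v : Fin (n + 1) → EuclideanSpace ℝ (Fin n))
    (i : Fin (n + 1)) : ENNReal :=
  μH[(n : ℝ) - 1] (Metric.sphere (v i) 1 ∩ vertexCone v i)

open Metric Finset
open scoped Pointwise

variable {ι : Type*}

namespace AffineBasis

variable {k V P : Type*} [Ring k] [AddCommGroup V] [Module k V] [AddTorsor V P]
  (b : AffineBasis ι k P)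

theorem coord_linear_vsub_of_ne [DecidableEq ι] {i k : ι} (hk : k ≠ i) (j : ι) :
    (b.coord k).linear (b j -ᵥ b i) = if k = j then 1 else 0 := by
  rw [AffineMap.linearMap_vsub, b.coord_apply_ne hk, b.coord_apply, vsub_eq_sub, sub_zero]

variable [Fintype ι]

theorem sum_coord_linear_eq_zero (u : V) : ∑ j, (b.coord j).linear u = 0 := by
  obtain ⟨i⟩ := b.nonempty
  have h := b.sum_coord_apply_eq_one (u +ᵥ b i)
  simp only [AffineMap.map_vadd, vadd_eq_add, sum_add_distrib, b.sum_coord_apply_eq_one,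
    add_eq_right] at h
  exact h

variable [DecidableEq ι]

theorem coord_linear_eq_neg_sum_erase (i : ι) (u : V) :
    (b.coord i).linear u = -∑ j ∈ univ.erase i, (b.coord j).linear u := by
  rw [eq_neg_iff_add_eq_zero, add_sum_erase univ (fun j => (b.coord j).linear u) (mem_univ i),
    b.sum_coord_linear_eq_zero]

theorem ext_coord_linear_of_ne (i : ι) {u w : V}
    (h : ∀ j ≠ i, (b.coord j).linear u = (b.coord j).linear w) : u = w := by
  have hall : ∀ j, (b.coord j).linear u = (b.coord j).linear w := by
    intro j
    rcases eq_or_ne j i with rfl | hj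
    · rw [coord_linear_eq_neg_sum_erase, coord_linear_eq_neg_sum_erase]
      exact congrArg _ (sum_congr rfl fun k hk => h k (ne_of_mem_erase hk))
    · exact h j hj
  refine vadd_right_cancel (b i) (b.ext_elem fun j => ?_)
  rw [AffineMap.map_vadd, AffineMap.map_vadd, hall j]

end AffineBasis

variable [Fintype ι] [DecidableEq ι]

def edgeCone {E : Type*} [AddCommGroup E] [Module ℝ E] (v : ι → E) (i : ι) : Set E :=
  {u | ∃ a : ι → ℝ, (∀ j, 0 ≤ a j) ∧ u = ∑ j ∈ univ.erase i, a j • (v j - v i)}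

def signedEdgeCone {E : Type*} [AddCommGroup E] [Module ℝ E] (v : ι → E) : ι ⊕ ι → Set E :=
  Sum.elim (edgeCone v) fun i => -edgeCone v i

namespace AffineBasis

variable {E : Type*} [AddCommGroup E] [Module ℝ E] (b : AffineBasis ι ℝ E) {i j : ι} {u : E}

theorem coord_linear_sum_smul_sub {k : ι} (hk : k ≠ i) (a : ι → ℝ) :
    (b.coord k).linear (∑ j ∈ univ.erase i, a j • (b j - b i)) = a k := by
  simp only [map_sum, map_smul, ← vsub_eq_sub, b.coord_linear_vsub_of_ne hk, smul_eq_mul,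
    mul_ite, mul_one, mul_zero, sum_ite_eq, mem_erase, ne_eq, hk, not_false_eq_true, mem_univ,
    and_self, if_true]

theorem mem_edgeCone_iff : u ∈ edgeCone b i ↔ ∀ k ≠ i, 0 ≤ (b.coord k).linear u := by
  constructor
  · rintro ⟨a, ha, rfl⟩ k hk
    rw [b.coord_linear_sum_smul_sub hk]
    exact ha k
  · intro hu
    refine ⟨fun j => if j = i then 0 else (b.coord j).linear u, fun j => ?_,
      b.ext_coord_linear_of_ne i fun k hk => ?_⟩
    · show 0 ≤ ite _ _ _
      split_ifs with hj
      exacts [le_rfl, hu j hj]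
    · rw [b.coord_linear_sum_smul_sub hk, if_neg hk]

theorem eq_zero_of_mem_edgeCone_of_mem_edgeCone (hij : i ≠ j) (hi : u ∈ edgeCone b i)
    (hj : u ∈ edgeCone b j) : u = 0 := by
  rw [mem_edgeCone_iff] at hi hj
  have hnonneg : ∀ k ∈ univ, 0 ≤ (b.coord k).linear u := fun k _ => by
    rcases eq_or_ne k i with rfl | hk
    exacts [hj k hij, hi k hk]
  have hzero := (sum_eq_zero_iff_of_nonneg hnonneg).mp (b.sum_coord_linear_eq_zero u)
  exact b.ext_coord_linear_of_ne i fun k _ => by rw [hzero k (mem_univ k), map_zero]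

theorem eq_zero_of_mem_edgeCone_of_neg_mem (hu : u ∈ edgeCone b i) (hnu : -u ∈ edgeCone b i) :
    u = 0 := by
  rw [mem_edgeCone_iff] at hu hnu
  refine b.ext_coord_linear_of_ne i fun k hk => ?_
  have hnk := hnu k hk
  rw [map_neg] at hnk
  rw [map_zero]
  linarith [hu k hk]

theorem exists_nonneg_smul_of_mem_edgeCone_of_neg_mem (hij : i ≠ j) (hu : u ∈ edgeCone b i)
    (hnu : -u ∈ edgeCone b j) : ∃ t : ℝ, 0 ≤ t ∧ u = t • (b j - b i) := by
  rw [mem_edgeCone_iff] at hu hnu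
  refine ⟨_, hu j hij.symm, b.ext_coord_linear_of_ne i fun k hk => ?_⟩
  rw [map_smul, ← vsub_eq_sub, b.coord_linear_vsub_of_ne hk, smul_eq_mul]
  split_ifs with hkj
  · rw [hkj, mul_one]
  · have hnk := hnu k hkj
    rw [map_neg] at hnk
    rw [mul_zero]
    linarith [hu k hk]

theorem sameRay_of_mem_edgeCone_of_neg_mem {u₁ u₂ : E} (h₁ : u₁ ∈ edgeCone b i)
    (h₁' : -u₁ ∈ edgeCone b j) (h₂ : u₂ ∈ edgeCone b i) (h₂' : -u₂ ∈ edgeCone b j) :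
    SameRay ℝ u₁ u₂ := by
  rcases eq_or_ne i j with rfl | hij
  · rw [b.eq_zero_of_mem_edgeCone_of_neg_mem h₁ h₁']
    exact .zero_left _
  · obtain ⟨t₁, ht₁, rfl⟩ := b.exists_nonneg_smul_of_mem_edgeCone_of_neg_mem hij h₁ h₁'
    obtain ⟨t₂, ht₂, rfl⟩ := b.exists_nonneg_smul_of_mem_edgeCone_of_neg_mem hij h₂ h₂'
    exact (SameRay.sameRay_nonneg_smul_left _ ht₁).nonneg_smul_right ht₂

theorem sameRay_of_mem_signedEdgeCone_inter {p q : ι ⊕ ι} (hpq : p ≠ q) {u₁ u₂ : E}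
    (h₁ : u₁ ∈ signedEdgeCone b p ∩ signedEdgeCone b q)
    (h₂ : u₂ ∈ signedEdgeCone b p ∩ signedEdgeCone b q) : SameRay ℝ u₁ u₂ := by
  rcases p with i | i <;> rcases q with j | j <;>
    simp only [signedEdgeCone, Sum.elim_inl, Sum.elim_inr, Set.mem_inter_iff, Set.mem_neg]
      at h₁ h₂
  · have hij : i ≠ j := fun h => hpq (h ▸ rfl)
    rw [b.eq_zero_of_mem_edgeCone_of_mem_edgeCone hij h₁.1 h₁.2]
    exact .zero_left _
  · exact b.sameRay_of_mem_edgeCone_of_neg_mem h₁.1 h₁.2 h₂.1 h₂.2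
  · exact b.sameRay_of_mem_edgeCone_of_neg_mem h₁.2 h₁.1 h₂.2 h₂.1
  · have hij : i ≠ j := fun h => hpq (h ▸ rfl)
    rw [neg_eq_zero.mp (b.eq_zero_of_mem_edgeCone_of_mem_edgeCone hij h₁.1 h₁.2)]
    exact .zero_left _

end AffineBasis

section Sphere

variable {E : Type*} [NormedAddCommGroup E]

theorem hausdorffMeasure_sphere_inter_neg [MeasurableSpace E] [BorelSpace E] (d r : ℝ)
    (s : Set E) : μH[d] (sphere (0 : E) r ∩ -s) = μH[d] (sphere (0 : E) r ∩ s) := by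
  have : sphere (0 : E) r ∩ -s = IsometryEquiv.neg E ⁻¹' (sphere 0 r ∩ s) := by
    ext u
    simp
  rw [this, IsometryEquiv.hausdorffMeasure_preimage]

variable [NormedSpace ℝ E]

theorem subsingleton_sphere_inter_of_sameRay {s : Set E} (r : ℝ)
    (hs : ∀ x ∈ s, ∀ y ∈ s, SameRay ℝ x y) : (sphere (0 : E) r ∩ s).Subsingleton :=
  fun x hx y hy => (hs x hx.2 y hy.2).eq_of_norm_eq <| by
    rw [mem_sphere_zero_iff_norm.mp hx.1, mem_sphere_zero_iff_norm.mp hy.1]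

variable [FiniteDimensional ℝ E]

theorem AffineBasis.isClosed_edgeCone (b : AffineBasis ι ℝ E) (i : ι) :
    IsClosed (edgeCone b i) := by
  have : edgeCone b i = ⋂ k ∈ {k | k ≠ i}, (b.coord k).linear ⁻¹' Set.Ici 0 := by
    ext u
    simp [b.mem_edgeCone_iff]
  rw [this]
  exact isClosed_biInter fun k _ =>
    isClosed_Ici.preimage (b.coord k).linear.continuous_of_finiteDimensional

theorem AffineBasis.isClosed_signedEdgeCone (b : AffineBasis ι ℝ E) (p : ι ⊕ ι) :
    IsClosed (signedEdgeCone b p) := by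
  rcases p with i | i
  exacts [b.isClosed_edgeCone i, (b.isClosed_edgeCone i).neg]

variable [MeasurableSpace E] [BorelSpace E]

theorem AffineBasis.two_mul_sum_hausdorffMeasure_sphere_inter_edgeCone_le
    (b : AffineBasis ι ℝ E) {d : ℝ} (hd : 0 < d) (r : ℝ) :
    2 * ∑ i, μH[d] (sphere (0 : E) r ∩ edgeCone b i) ≤ μH[d] (sphere (0 : E) r) := by
  have := Measure.nullSingletonClass_hausdorff E hd
  have hsigned : ∑ p, μH[d] (sphere (0 : E) r ∩ signedEdgeCone b p)
      = 2 * ∑ i, μH[d] (sphere (0 : E) r ∩ edgeCone b i) := by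
    simp only [Fintype.sum_sum_type, signedEdgeCone, Sum.elim_inl, Sum.elim_inr,
      hausdorffMeasure_sphere_inter_neg, two_mul]
  have hdisj : Pairwise (Function.onFun (AEDisjoint μH[d])
      fun p => sphere (0 : E) r ∩ signedEdgeCone b p) := fun p q hpq =>
    ((subsingleton_sphere_inter_of_sameRay r fun _ h₁ _ h₂ =>
      b.sameRay_of_mem_signedEdgeCone_inter hpq h₁ h₂).anti
        fun _ hu => ⟨hu.1.1, hu.1.2, hu.2.2⟩).measure_zero _
  have hmeas : ∀ p, NullMeasurableSet (sphere (0 : E) r ∩ signedEdgeCone b p) μH[d] := fun p =>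
    (isClosed_sphere.inter (b.isClosed_signedEdgeCone p)).measurableSet.nullMeasurableSet
  calc 2 * ∑ i, μH[d] (sphere (0 : E) r ∩ edgeCone b i)
      = μH[d] (⋃ p, sphere (0 : E) r ∩ signedEdgeCone b p) := by
        rw [← hsigned, measure_iUnion₀ hdisj hmeas, tsum_fintype]
    _ ≤ μH[d] (sphere (0 : E) r) :=
        measure_mono (Set.iUnion_subset fun _ => Set.inter_subset_left)

end Sphere

theorem mem_vertexCone_iff {n : ℕ} (v : Fin (n + 1) → EuclideanSpace ℝ (Fin n)) (i : Fin (n + 1))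
    (p : EuclideanSpace ℝ (Fin n)) : p ∈ vertexCone v i ↔ p - v i ∈ edgeCone v i := by
  simp only [vertexCone, edgeCone, Set.mem_ofPred_eq, sub_eq_iff_eq_add']

theorem solidAngle_eq_hausdorffMeasure_sphere_inter_edgeCone {n : ℕ}
    (v : Fin (n + 1) → EuclideanSpace ℝ (Fin n)) (i : Fin (n + 1)) :
    solidAngle v i = μH[(n : ℝ) - 1] (sphere 0 1 ∩ edgeCone v i) := by
  have : sphere 0 1 ∩ edgeCone v i
      = IsometryEquiv.addRight (v i) ⁻¹' (sphere (v i) 1 ∩ vertexCone v i) := by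
    ext u
    simp [mem_vertexCone_iff]
  rw [solidAngle, this, IsometryEquiv.hausdorffMeasure_preimage]

/-- for `n ≥ 2`, the sum of the solid angles of a nondegenerate
`n`-simplex in `ℝⁿ` is at most half the `(n-1)`-dimensional volume of the unit
sphere `S^{n-1}`. -/
theorem sum_solidAngle_le {n : ℕ} (hn : 2 ≤ n)
    (v : Fin (n + 1) → EuclideanSpace ℝ (Fin n))
    (hv : AffineIndependent ℝ v) :
    ∑ i, solidAngle v i ≤
      2⁻¹ * μH[(n : ℝ) - 1] (Metric.sphere (0 : EuclideanSpace ℝ (Fin n)) 1) := by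
  have hd : 0 < (n : ℝ) - 1 := by
    have : (2 : ℝ) ≤ n := by exact_mod_cast hn
    linarith
  let b : AffineBasis (Fin (n + 1)) ℝ (EuclideanSpace ℝ (Fin n)) :=
    ⟨v, hv, hv.affineSpan_eq_top_iff_card_eq_finrank_add_one.mpr (by simp)⟩
  have key := b.two_mul_sum_hausdorffMeasure_sphere_inter_edgeCone_le hd 1
  simp only [← solidAngle_eq_hausdorffMeasure_sphere_inter_edgeCone] at key
  rw [← ENNReal.div_eq_inv_mul, ENNReal.le_div_iff_mul_le (by simp) (by simp), mul_comm]
  exact key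
end

section
/- With A the symmetric matrix whose columns form a regular unit n-simplex (diagonal μ, off-diagonal ν as above) and B_i the basepoint-change matrices, for each i there exists an orthogonal matrix Q_i ∈ O(n) such that A·B_i = Q_i·A. -/
open Matrix

/-- The symmetric matrix whose columns, together with the origin, form a
regular `n`-simplex with unit edge lengths. -/
noncomputable def regularSimplexMatrix (n : ℕ) : Matrix (Fin n) (Fin n) ℝ :=
  fun i j =>
    if i = j then (n + Real.sqrt (n + 1) - 1) / (Real.sqrt 2 * n)
    else (Real.sqrt (n + 1) - 1) / (Real.sqrt 2 * n)

/-- The basepoint-change matrix `B i`: the identity matrix with the `i`-th row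
replaced by `(-1, -1, …, -1)`. -/
def basepointChange (n : ℕ) (i : Fin n) : Matrix (Fin n) (Fin n) ℝ :=
  fun k l => if k = i then -1 else if k = l then 1 else 0

/-!
Writing `J` for the all-ones matrix, `A = (1 + c J) / √2` with `c = (√(n+1) - 1) / n`, and its
Gram matrix is `Aᵀ A = (1 + J) / 2`: the columns are unit vectors at pairwise angle `π / 3`.
In the coordinates given by these columns, `B i = 1 - eᵢ (eᵢ + 𝟙)ᵀ` is the reflection along `eᵢ`
for the form `1 + J`, so `B iᵀ (Aᵀ A) B i = Aᵀ A`, and any such `B` makes `A B A⁻¹` orthogonal.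
-/

namespace Matrix

variable {ι R : Type*} [Fintype ι] [DecidableEq ι] [CommRing R]

theorem det_one_add_vecMulVec (u v : ι → R) : det (1 + vecMulVec u v) = 1 + v ⬝ᵥ u := by
  rw [vecMulVec_eq Unit, det_one_add_replicateCol_mul_replicateRow]

theorem mul_mul_inv_mem_orthogonalGroup {A B : Matrix ι ι R} (hA : IsUnit A.det)
    (hB : Bᵀ * (Aᵀ * A) * B = Aᵀ * A) : A * B * A⁻¹ ∈ orthogonalGroup ι R := by
  have hAt : IsUnit Aᵀ.det := by rwa [det_transpose]
  rw [mem_orthogonalGroup_iff']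
  calc (A * B * A⁻¹)ᵀ * (A * B * A⁻¹) = (Aᵀ)⁻¹ * (Bᵀ * (Aᵀ * A) * B) * A⁻¹ := by
        simp only [transpose_mul, transpose_nonsing_inv, Matrix.mul_assoc]
    _ = ((Aᵀ)⁻¹ * Aᵀ) * (A * A⁻¹) := by rw [hB]; simp only [Matrix.mul_assoc]
    _ = 1 := by rw [nonsing_inv_mul _ hAt, mul_nonsing_inv _ hA, Matrix.mul_one]

/-- When `uᵀ K u = 2`, the matrix `1 - u (K u)ᵀ` is the reflection along `u` for the symmetric
bilinear form `K`, hence an isometry of `K`. -/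
theorem transpose_mul_mul_one_sub_vecMulVec {K : Matrix ι ι R} (hK : Kᵀ = K) {u : ι → R}
    (hu : u ⬝ᵥ K *ᵥ u = 2) :
    (1 - vecMulVec u (K *ᵥ u))ᵀ * K * (1 - vecMulVec u (K *ᵥ u)) = K := by
  set P := vecMulVec u (K *ᵥ u)
  have hPK : Pᵀ * K = K * P := by
    rw [transpose_vecMulVec, vecMulVec_mul, mul_vecMulVec, ← hK, vecMul_transpose, hK]
  have hPP : P * P = (2 : R) • P := by
    rw [vecMulVec_mul_vecMulVec, dotProduct_comm, hu, vecMulVec_smul]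
  calc (1 - P)ᵀ * K * (1 - P) = K - Pᵀ * K - K * P + Pᵀ * K * P := by
        rw [transpose_sub, transpose_one]; noncomm_ring
    _ = K := by rw [hPK, Matrix.mul_assoc, hPP, Matrix.mul_smul, two_smul]; abel

end Matrix

theorem basepointChange_eq_one_sub_vecMulVec (n : ℕ) (i : Fin n) :
    basepointChange n i =
      1 - vecMulVec (Pi.single i 1) ((1 + vecMulVec 1 1) *ᵥ Pi.single i 1) := by
  ext k l
  by_cases hk : k = i <;> by_cases hl : l = i <;>
    simp [basepointChange, vecMulVec_apply, one_apply, hk, hl, eq_comm (a := i)]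

theorem regularSimplexMatrix_eq (n : ℕ) :
    regularSimplexMatrix n =
      (√2)⁻¹ • (1 + ((√(n + 1) - 1) / n) • vecMulVec 1 1) := by
  ext k l
  have hn : (n : ℝ) ≠ 0 := Nat.cast_ne_zero.mpr k.pos.ne'
  by_cases h : k = l
  · simp [regularSimplexMatrix, h]
    field_simp
    ring
  · simp [regularSimplexMatrix, h]
    field_simp

theorem regularSimplexMatrix_transpose_mul_self (n : ℕ) :
    (regularSimplexMatrix n)ᵀ * regularSimplexMatrix n =
      (2 : ℝ)⁻¹ • (1 + vecMulVec 1 1) := by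
  obtain rfl | hn := eq_or_ne n 0
  · exact Subsingleton.elim _ _
  set c : ℝ := (√(n + 1) - 1) / n
  have hc : c * (2 + c * n) = 1 := by
    have hn' : (n : ℝ) ≠ 0 := Nat.cast_ne_zero.mpr hn
    have hs : √(n + 1 : ℝ) ^ 2 = n + 1 := Real.sq_sqrt (by positivity)
    simp only [c]
    field_simp
    linear_combination hs
  set J := vecMulVec (1 : Fin n → ℝ) 1
  have hJJ : J * J = (n : ℝ) • J := by
    rw [vecMulVec_mul_vecMulVec, one_dotProduct_one, Fintype.card_fin, vecMulVec_smul]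
  have hM : (1 + c • J) * (1 + c • J) = 1 + J :=
    calc (1 + c • J) * (1 + c • J) = 1 + (c * (2 + c * n)) • J := by
          simp only [add_mul, mul_add, Matrix.mul_one, Matrix.one_mul, smul_mul_smul_comm, hJJ,
            smul_smul]
          module
      _ = 1 + J := by rw [hc, one_smul]
  rw [regularSimplexMatrix_eq, transpose_smul, transpose_add, transpose_one, transpose_smul,
    transpose_vecMulVec, smul_mul_smul_comm, hM, ← mul_inv, Real.mul_self_sqrt zero_le_two]

theorem isUnit_det_regularSimplexMatrix (n : ℕ) : IsUnit (regularSimplexMatrix n).det := by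
  have h := congrArg det (regularSimplexMatrix_transpose_mul_self n)
  rw [det_mul, det_transpose, det_smul, det_one_add_vecMulVec, one_dotProduct_one,
    Fintype.card_fin] at h
  have hsq : (regularSimplexMatrix n).det * (regularSimplexMatrix n).det ≠ 0 := by
    rw [h]; positivity
  exact isUnit_iff_ne_zero.mpr (left_ne_zero_of_mul hsq)

theorem basepointChange_transpose_mul_mul (n : ℕ) (i : Fin n) :
    (basepointChange n i)ᵀ * (1 + vecMulVec 1 1) * basepointChange n i = 1 + vecMulVec 1 1 := by
  rw [basepointChange_eq_one_sub_vecMulVec]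
  refine transpose_mul_mul_one_sub_vecMulVec ?_ ?_
  · rw [transpose_add, transpose_one, transpose_vecMulVec]
  · norm_num

theorem regularSimplexMatrix_basepointChange_orthogonal_general (n : ℕ)
    (i : Fin n) :
    ∃ Q ∈ Matrix.orthogonalGroup (Fin n) ℝ,
      regularSimplexMatrix n * basepointChange n i = Q * regularSimplexMatrix n := by
  have hA := isUnit_det_regularSimplexMatrix n
  refine ⟨regularSimplexMatrix n * basepointChange n i * (regularSimplexMatrix n)⁻¹,
    mul_mul_inv_mem_orthogonalGroup hA ?_, by rw [nonsing_inv_mul_cancel_right _ _ hA]⟩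
  rw [regularSimplexMatrix_transpose_mul_self, Matrix.mul_smul, Matrix.smul_mul,
    basepointChange_transpose_mul_mul]

/-- changing the basepoint of the regular simplex is realized by
an orthogonal transformation: for each `i` there is `Q ∈ O(n)` with
`A · B i = Q · A`. -/
theorem regularSimplexMatrix_basepointChange_orthogonal (n : ℕ) (hn : 0 < n)
    (i : Fin n) :
    ∃ Q ∈ Matrix.orthogonalGroup (Fin n) ℝ,
      regularSimplexMatrix n * basepointChange n i = Q * regularSimplexMatrix n :=
  regularSimplexMatrix_basepointChange_orthogonal_general n i
end

section
/- In the group G = ⟨y₁, y₂, y₃ | (y_j y_i⁻¹)³ = (y_k y_l⁻¹)³ for all choices with neither side trivial; y_i y_j⁻¹ y_i = y_j⁻¹ y_i y_j⁻¹ for i ≠ j; y_k y_j⁻¹ y_i y_j⁻¹ y_k = y_j⁻¹ y_i y_j⁻¹ for i, j, k distinct⟩, the element τ = (y_i y_j⁻¹)³ (for any i ≠ j) is central and satisfies τ² = 1. -/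
/-!
Put `a = y i` and `b = (y j)⁻¹`. Relation (ii) is the braid relation `a b a = b a b`, so
`τ = (a b)³ = Δ²` with `Δ = b a b`, and conjugation by `Δ` interchanges `a` and `b`;
hence `Δ²` commutes with `y i` and `y j`. Relation (iii) says `y k Δ y k = Δ`, so
conjugation by `Δ` interchanges `y k` and `(y k)⁻¹`, and again `Δ²` commutes with `y k`.
Finally relation (i) gives `τ = (y j (y i)⁻¹)³ = τ⁻¹`.
-/

namespace Stmt18

/-- Relators for the symmetric presentation of `π₁(C(K₄))` on generators
`y₁, y₂, y₃` (encoded as `0, 1, 2 : Fin 3`):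
(i)   `(y_j y_i⁻¹)³ = (y_k y_l⁻¹)³` whenever `i ≠ j` and `k ≠ l`;
(ii)  `y_i y_j⁻¹ y_i = y_j⁻¹ y_i y_j⁻¹` for `i ≠ j`;
(iii) `y_k y_j⁻¹ y_i y_j⁻¹ y_k = y_j⁻¹ y_i y_j⁻¹` for `i, j, k` distinct. -/
def rels : Set (FreeGroup (Fin 3)) :=
  let y : Fin 3 → FreeGroup (Fin 3) := FreeGroup.of
  {r | ∃ i j k l : Fin 3, i ≠ j ∧ k ≠ l ∧
        r = (y j * (y i)⁻¹) ^ 3 * ((y k * (y l)⁻¹) ^ 3)⁻¹} ∪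
  {r | ∃ i j : Fin 3, i ≠ j ∧
        r = y i * (y j)⁻¹ * y i * ((y j)⁻¹ * y i * (y j)⁻¹)⁻¹} ∪
  {r | ∃ i j k : Fin 3, i ≠ j ∧ j ≠ k ∧ i ≠ k ∧
        r = y k * (y j)⁻¹ * y i * (y j)⁻¹ * y k *
              ((y j)⁻¹ * y i * (y j)⁻¹)⁻¹}

/-- The symmetric presentation of `π₁(C(K₄))`. -/
abbrev G := PresentedGroup rels

/-- The generators of `G`. -/
def y (i : Fin 3) : G := PresentedGroup.of i

section Braid

variable {H : Type*} [Group H]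

theorem commute_sq_of_interchanges {d a b : H} (h₁ : d * a = b * d) (h₂ : d * b = a * d) :
    Commute (d ^ 2) a :=
  calc d ^ 2 * a = d * (d * a) := by rw [sq, mul_assoc]
    _ = d * b * d := by rw [h₁, mul_assoc]
    _ = a * d ^ 2 := by rw [h₂, mul_assoc, sq]

theorem commute_sq_of_mul_mul_eq_self {m c : H} (h : c * m * c = m) : Commute (m ^ 2) c :=
  commute_sq_of_interchanges (b := c⁻¹) (by rw [eq_inv_mul_iff_mul_eq, ← mul_assoc, h])
    (by rw [eq_comm, ← mul_inv_eq_iff_eq_mul, inv_inv, h])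

variable {a b : H}

theorem mul_pow_three_eq_sq_of_braid (h : a * b * a = b * a * b) :
    (a * b) ^ 3 = (b * a * b) ^ 2 :=
  calc (a * b) ^ 3 = a * b * a * (b * a * b) := by
        simp only [pow_succ, pow_zero, one_mul, mul_assoc]
    _ = (b * a * b) ^ 2 := by rw [h, sq]

theorem delta_mul_left_of_braid (h : a * b * a = b * a * b) : b * a * b * a = b * (b * a * b) :=
  calc b * a * b * a = b * (a * b * a) := by group
    _ = b * (b * a * b) := by rw [h]

theorem delta_mul_right_of_braid (h : a * b * a = b * a * b) : b * a * b * b = a * (b * a * b) :=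
  calc b * a * b * b = a * b * a * b := by rw [h]
    _ = a * (b * a * b) := by group

theorem mul_pow_three_commute_left_of_braid (h : a * b * a = b * a * b) :
    Commute ((a * b) ^ 3) a := by
  rw [mul_pow_three_eq_sq_of_braid h]
  exact commute_sq_of_interchanges (delta_mul_left_of_braid h) (delta_mul_right_of_braid h)

theorem mul_pow_three_commute_right_of_braid (h : a * b * a = b * a * b) :
    Commute ((a * b) ^ 3) b := by
  rw [mul_pow_three_eq_sq_of_braid h]
  exact commute_sq_of_interchanges (delta_mul_right_of_braid h) (delta_mul_left_of_braid h)

end Braid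

section Presentation

variable {i j : Fin 3}

theorem y_pow_three_eq {k l : Fin 3} (hij : i ≠ j) (hkl : k ≠ l) :
    (y j * (y i)⁻¹) ^ 3 = (y k * (y l)⁻¹) ^ 3 :=
  PresentedGroup.mk_eq_mk_of_mul_inv_mem (.inl (.inl ⟨i, j, k, l, hij, hkl, rfl⟩))

theorem y_braid (hij : i ≠ j) : y i * (y j)⁻¹ * y i = (y j)⁻¹ * y i * (y j)⁻¹ :=
  PresentedGroup.mk_eq_mk_of_mul_inv_mem (.inl (.inr ⟨i, j, hij, rfl⟩))

theorem y_mul_mul_eq_self {k : Fin 3} (hij : i ≠ j) (hjk : j ≠ k) (hik : i ≠ k) :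
    y k * ((y j)⁻¹ * y i * (y j)⁻¹) * y k = (y j)⁻¹ * y i * (y j)⁻¹ := by
  simp only [← mul_assoc]
  exact PresentedGroup.mk_eq_mk_of_mul_inv_mem (.inr ⟨i, j, k, hij, hjk, hik, rfl⟩)

theorem commute_of_forall_commute_y {τ : G} (hτ : ∀ k, Commute τ (y k)) (g : G) :
    Commute τ g :=
  have hg : g ∈ Subgroup.centralizer {τ} := PresentedGroup.generated_by rels _
    (fun k ↦ Subgroup.mem_centralizer_iff.mpr fun _ h ↦ Set.mem_singleton_iff.mp h ▸ hτ k) g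
  Subgroup.mem_centralizer_iff.mp hg τ rfl

end Presentation

/-- the element `τ = (y_i y_j⁻¹)³` (for any `i ≠ j`) is central
in `G` and satisfies `τ² = 1`. -/
theorem tau_central_and_involutive :
    ∀ i j : Fin 3, i ≠ j →
      (∀ g : G, (y i * (y j)⁻¹) ^ 3 * g = g * (y i * (y j)⁻¹) ^ 3) ∧
      ((y i * (y j)⁻¹) ^ 3) ^ 2 = 1 := by
  intro i j hij
  have hbraid := y_braid hij
  have hcomm (k : Fin 3) : Commute ((y i * (y j)⁻¹) ^ 3) (y k) := by
    by_cases hki : k = i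
    · subst hki
      exact mul_pow_three_commute_left_of_braid hbraid
    by_cases hkj : k = j
    · subst hkj
      exact Commute.inv_right_iff.mp (mul_pow_three_commute_right_of_braid hbraid)
    rw [mul_pow_three_eq_sq_of_braid hbraid]
    exact commute_sq_of_mul_mul_eq_self (y_mul_mul_eq_self hij (Ne.symm hkj) (Ne.symm hki))
  refine ⟨fun g ↦ commute_of_forall_commute_y hcomm g, ?_⟩
  have hinv : (y i * (y j)⁻¹) ^ 3 = ((y i * (y j)⁻¹) ^ 3)⁻¹ := by
    rw [← inv_pow, mul_inv_rev, inv_inv]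
    exact y_pow_three_eq hij.symm hij.symm
  rw [sq, mul_eq_one_iff_eq_inv, ← hinv]

end Stmt18
end

section
/- A homomorphism from S_{n+1} to the hyperoctahedral group ℤ₂ ≀ S_n whose image surjects onto the S_n quotient must be injective when n > 3; consequently, since |S_{n+1}| = (n+1)! must then divide |ℤ₂ ≀ S_n| = 2ⁿ·n!, such a homomorphism can exist only if n+1 divides 2ⁿ, i.e., only if n = 2^k − 1 for some k. -/
/-
For `m ≥ 5` every nontrivial normal subgroup of `S_m` contains `A_m`, so a non-injective
homomorphism out of `S_{n+1}` has image of order at most 2. Composed with the projection onto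
`S_n` the image is all of `S_n`, of order `n! > 2`, so the homomorphism is injective. Then
`(n+1)!` divides `|ℤ₂ ≀ S_n| = 2ⁿ n!`, i.e. `n + 1` divides `2ⁿ`, so `n + 1` is a power of two.
-/

namespace Stmt19

/-- The action of `S_n` on `(ℤ₂)ⁿ` by permuting coordinates, as a homomorphism
into the automorphism group of `(ℤ₂)ⁿ` (written multiplicatively). -/
def permAction (n : ℕ) :
    Equiv.Perm (Fin n) →* MulAut (Multiplicative (Fin n → ZMod 2)) :=
  MonoidHom.mk'
    (fun σ => AddEquiv.toMultiplicative
      ((RingEquiv.piCongrLeft' (fun _ : Fin n => ZMod 2) σ).toAddEquiv))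
    (fun σ τ => by ext f; rfl)

/-- The hyperoctahedral group `ℤ₂ ≀ S_n`, realized as the semidirect product
`(ℤ₂)ⁿ ⋊ S_n` for the coordinate-permutation action. -/
abbrev Hyperoctahedral (n : ℕ) :=
  SemidirectProduct (Multiplicative (Fin n → ZMod 2)) (Equiv.Perm (Fin n))
    (permAction n)

end Stmt19

open Equiv

theorem Equiv.Perm.injective_of_two_lt_card_range {α H : Type*} [Fintype α] [DecidableEq α]
    [Group H] (hα : 5 ≤ Nat.card α) (f : Perm α →* H) (hf : 2 < Nat.card f.range) :
    Function.Injective f := by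
  rw [← f.ker_eq_bot_iff]
  by_contra hker
  have : Nontrivial f.ker := (Subgroup.nontrivial_iff_ne_bot _).mpr hker
  have hle : alternatingGroup α ≤ f.ker := alternatingGroup_le_of_normal hα this
  have : Nontrivial α := Finite.one_lt_card_iff_nontrivial.mp (by omega)
  have hindex : f.ker.index ∣ 2 :=
    alternatingGroup.index_eq_two (α := α) ▸ Subgroup.index_dvd_of_le hle
  rw [Subgroup.index_ker] at hindex
  exact absurd (Nat.le_of_dvd two_pos hindex) (by omega)

theorem Nat.exists_eq_two_pow_sub_one_of_succ_dvd_two_pow {n m : ℕ} (h : n + 1 ∣ 2 ^ m) :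
    ∃ k, n = 2 ^ k - 1 := by
  obtain ⟨k, -, hk⟩ := (Nat.dvd_prime_pow Nat.prime_two).mp h
  exact ⟨k, by omega⟩

namespace Stmt19

theorem card_hyperoctahedral (n : ℕ) : Nat.card (Hyperoctahedral n) = 2 ^ n * n.factorial := by
  simp [SemidirectProduct.card, Fintype.card_perm]

/-- for `n > 3`, any homomorphism `S_{n+1} → ℤ₂ ≀ S_n` whose
image surjects onto the quotient `S_n` is injective; consequently such a
homomorphism can exist only if `n = 2^k - 1` for some `k`. -/
theorem symm_to_hyperoctahedral (n : ℕ) (hn : 3 < n) :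
    (∀ φ : Equiv.Perm (Fin (n + 1)) →* Hyperoctahedral n,
      Function.Surjective (SemidirectProduct.rightHom.comp φ) →
      Function.Injective φ) ∧
    ((∃ φ : Equiv.Perm (Fin (n + 1)) →* Hyperoctahedral n,
        Function.Surjective (SemidirectProduct.rightHom.comp φ)) →
      ∃ k : ℕ, n = 2 ^ k - 1) := by
  have hcard : 5 ≤ Nat.card (Fin (n + 1)) := by rw [Nat.card_fin]; omega
  have injective (φ : Perm (Fin (n + 1)) →* Hyperoctahedral n)
      (hφ : Function.Surjective (SemidirectProduct.rightHom.comp φ)) :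
      Function.Injective φ := by
    refine Function.Injective.of_comp (f := SemidirectProduct.rightHom)
      (Perm.injective_of_two_lt_card_range hcard (SemidirectProduct.rightHom.comp φ) ?_)
    rw [MonoidHom.range_eq_top.mpr hφ, Subgroup.card_top, Nat.card_perm, Nat.card_fin]
    exact (Nat.lt_factorial_self (by omega)).trans' (by omega)
  refine ⟨injective, fun ⟨φ, hφ⟩ => ?_⟩
  have hdvd := Subgroup.card_dvd_of_injective φ (injective φ hφ)
  rw [Nat.card_perm, Nat.card_fin, card_hyperoctahedral, Nat.factorial_succ] at hdvd
  exact Nat.exists_eq_two_pow_sub_one_of_succ_dvd_two_pow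
    (Nat.dvd_of_mul_dvd_mul_right n.factorial_pos hdvd)

end Stmt19
end
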